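/- Let t be odd with t dividing n, and suppose Q_{n/t} can be decomposed into paths of length s. Then Q_n can be decomposed into paths of length t·s. -/

import Mathlib

/-!
Write `n = m * t` and index the coordinates of `Q_n` by `Fin m × Fin t` (block, position). Every
vertex is uniquely `r + lift q` with `q` a vertex of `Q_m`, `lift q` constant on blocks, and `r`
vanishing at position `0`; for fixed `r` these vertices form a copy of `Q_m`. For an edge
`{q, q + e_c}` of `Q_m` and a representative `r`, flipping the `t` coordinates of block `c` one
after the other, starting from whichever endpoint has even parity, is a path of length `t` in
`Q_n`. As `t` is odd the two endpoints have different parities, so the segment does not depend on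
the orientation of the edge, and each edge of `Q_n` lies on exactly one segment: the even start of
its segment is one of the two vertices obtained by undoing the flips made before it. Replacing
every edge of a path of `Q_m` by its segment in a fixed copy gives a path of `Q_n`, because an
interior vertex of a segment is not in the copy and determines the segment it lies on.
-/

/-- The `n`-dimensional hypercube graph on `{0,1}^n`: two vertices are adjacent
iff they differ in exactly one coordinate. -/
def Q (n : ℕ) : SimpleGraph (Fin n → ZMod 2) where
  Adj x y := hammingDist x y = 1
  symm := ⟨fun x y h => by simpa [hammingDist_comm] using h⟩
  loopless := ⟨fun x h => by simp [hammingDist_self] at h⟩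

/-- A decomposition of a graph `G` into paths of length `k`: a family of paths,
each with `k` edges, such that every edge of `G` lies in exactly one of them. -/
def PathDecomp {V : Type*} (G : SimpleGraph V) (k : ℕ) : Prop :=
  ∃ (ι : Type) (u v : ι → V) (w : ∀ i : ι, G.Walk (u i) (v i)),
    (∀ i, (w i).IsPath ∧ (w i).length = k) ∧
    ∀ e ∈ G.edgeSet, ∃! i, e ∈ (w i).edges

open SimpleGraph

theorem ZModModule.add_cancel_left {G : Type*} [AddCommGroup G] [Module (ZMod 2) G] (x y : G) :
    x + (x + y) = y := by
  rw [← add_assoc, ZModModule.add_self, zero_add]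

theorem ZMod.two_add_one_eq_zero_iff {a : ZMod 2} : a + 1 = 0 ↔ a ≠ 0 := by
  revert a
  decide

theorem hammingDist_comp_equiv {ι κ β : Type*} [Fintype ι] [Fintype κ] [DecidableEq β]
    (e : κ ≃ ι) (x y : ι → β) : hammingDist (x ∘ e) (y ∘ e) = hammingDist x y :=
  Finset.card_bij' (fun i _ => e i) (fun j _ => e.symm j) (by simp) (by simp) (by simp) (by simp)

namespace SimpleGraph.Walk

variable {V W : Type*} {G : SimpleGraph V} {H : SimpleGraph W}

theorem dart_edge_mem_edges {a b : V} (p : G.Walk a b) {d : G.Dart} (hd : d ∈ p.darts) :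
    d.edge ∈ p.edges :=
  p.edges_eq_map_darts ▸ List.mem_map_of_mem hd

def ofSeq (g : ℕ → V) :
    (n : ℕ) → (∀ k < n, G.Adj (g k) (g (k + 1))) → G.Walk (g 0) (g n)
  | 0, _ => nil
  | n + 1, h => (ofSeq g n fun k hk => h k (by omega)).concat (h n (by omega))

section ofSeq

variable {g : ℕ → V} {n : ℕ} {hg : ∀ k < n, G.Adj (g k) (g (k + 1))}

@[simp]
theorem length_ofSeq : (ofSeq g n hg).length = n := by
  induction n with
  | zero => rfl
  | succ n ih => simp [ofSeq, ih]

theorem support_ofSeq : (ofSeq g n hg).support = (List.range (n + 1)).map g := by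
  induction n with
  | zero => rfl
  | succ n ih => rw [ofSeq, support_concat, ih, List.range_succ (n := n + 1)]; simp

theorem edges_ofSeq : (ofSeq g n hg).edges = (List.range n).map fun k => s(g k, g (k + 1)) := by
  induction n with
  | zero => rfl
  | succ n ih => rw [ofSeq, edges_concat, ih, List.range_succ]; simp

theorem isPath_ofSeq (hinj : Set.InjOn g (Set.Iic n)) : (ofSeq g n hg).IsPath := by
  rw [isPath_def, support_ofSeq]
  refine List.Nodup.map_on (fun x hx y hy hxy => hinj ?_ ?_ hxy) List.nodup_range <;> simp_all

end ofSeq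

def expand {f : W → V} (seg : (d : H.Dart) → G.Walk (f d.fst) (f d.snd)) :
    {a b : W} → H.Walk a b → G.Walk (f a) (f b)
  | _, _, nil => nil
  | _, _, cons (u := a) (v := b) h p => (seg ⟨(a, b), h⟩).append (expand seg p)

variable {f : W → V} (seg : (d : H.Dart) → G.Walk (f d.fst) (f d.snd)) {a b : W}

theorem length_expand {t : ℕ} (hseg : ∀ d, (seg d).length = t) (p : H.Walk a b) :
    (p.expand seg).length = t * p.length := by
  induction p with
  | nil => rfl
  | cons h p ih => rw [expand, length_append, hseg, ih, length_cons]; ring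

theorem mem_edges_expand {p : H.Walk a b} {e : Sym2 V} :
    e ∈ (p.expand seg).edges ↔ ∃ d ∈ p.darts, e ∈ (seg d).edges := by
  induction p with
  | nil => simp [expand]
  | cons h p ih => simp [expand, ih]

theorem exists_dart_of_mem_support_tail_expand {p : H.Walk a b} {x : V}
    (hx : x ∈ (p.expand seg).support.tail) : ∃ d ∈ p.darts, x ∈ (seg d).support := by
  induction p with
  | nil => simp [expand] at hx
  | cons h p ih =>
    rw [expand, support_append, List.tail_append_of_ne_nil (support_ne_nil _),
      List.mem_append] at hx
    rcases hx with hx | hx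
    · exact ⟨_, List.mem_cons_self, List.mem_of_mem_tail hx⟩
    · obtain ⟨d, hd, hxd⟩ := ih hx
      exact ⟨d, List.mem_cons_of_mem _ hd, hxd⟩

theorem isPath_expand (hseg : ∀ d, (seg d).IsPath)
    (hdisj : ∀ d d' : H.Dart, d.edge ≠ d'.edge → ∀ x ∈ (seg d).support,
      x ∈ (seg d').support → ∃ c ∈ d.edge, c ∈ d'.edge ∧ x = f c)
    {p : H.Walk a b} (hp : p.IsPath) : (p.expand seg).IsPath := by
  induction p with
  | nil => exact IsPath.nil
  | @cons a b c h p ih =>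
    rw [cons_isPath_iff] at hp
    have hrest := (ih hp.1).support_nodup
    rw [expand, isPath_def, support_append, List.nodup_append]
    refine ⟨(hseg _).support_nodup, hrest.sublist (List.tail_sublist _), ?_⟩
    rintro x hx _ hx' rfl
    obtain ⟨d, hd, hxd⟩ := exists_dart_of_mem_support_tail_expand seg hx'
    have hdp := p.dart_edge_mem_edges hd
    have hne : (⟨(a, b), h⟩ : H.Dart).edge ≠ d.edge := fun hab =>
      hp.2 (p.fst_mem_support_of_mem_edges (hab ▸ hdp))
    obtain ⟨c, hc, hcd, rfl⟩ := hdisj _ d hne x hx hxd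
    rcases Sym2.mem_iff.mp hc with rfl | rfl
    · exact hp.2 (p.mem_support_of_mem_edges hdp hcd)
    · rw [← (p.expand seg).cons_tail_support, List.nodup_cons] at hrest
      exact hrest.1 hx'

end SimpleGraph.Walk

namespace PathDecomp

variable {V W : Type*} {G : SimpleGraph V} {H : SimpleGraph W}

theorem map_iso {k : ℕ} (φ : H ≃g G) (h : PathDecomp H k) : PathDecomp G k := by
  obtain ⟨ι, u, v, w, hw, hcover⟩ := h
  refine ⟨ι, fun i => φ (u i), fun i => φ (v i), fun i => (w i).map φ.toHom,
    fun i => ⟨(hw i).1.map φ.injective, by rw [Walk.length_map, (hw i).2]⟩, fun e he => ?_⟩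
  have hmem : ∀ i, e ∈ ((w i).map φ.toHom).edges ↔ Sym2.map φ.symm e ∈ (w i).edges := by
    intro i
    have hφ : Sym2.map φ (Sym2.map φ.symm e) = e := by simp [Sym2.map_map]
    rw [Walk.edges_map]
    conv_lhs => rw [← hφ]
    exact List.mem_map_of_injective (Sym2.map.injective φ.injective)
  obtain ⟨i, hi, huniq⟩ := hcover _ ((Iso.map_mem_edgeSet_iff φ.symm).mpr he)
  exact ⟨i, (hmem i).mpr hi, fun j hj => huniq j ((hmem j).mp hj)⟩

theorem of_expand {R : Type} {f : R → W → V}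
    (seg : (r : R) → (d : H.Dart) → G.Walk (f r d.fst) (f r d.snd)) {s t : ℕ}
    (hH : PathDecomp H s) (hseg : ∀ r d, (seg r d).IsPath ∧ (seg r d).length = t)
    (hsymm : ∀ r d, seg r d.symm = (seg r d).reverse)
    (hdisj : ∀ r (d d' : H.Dart), d.edge ≠ d'.edge → ∀ x ∈ (seg r d).support,
      x ∈ (seg r d').support → ∃ c ∈ d.edge, c ∈ d'.edge ∧ x = f r c)
    (hcover : ∀ e ∈ G.edgeSet,
      ∃! p : R × Sym2 W, ∃ d : H.Dart, d.edge = p.2 ∧ e ∈ (seg p.1 d).edges) :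
    PathDecomp G (t * s) := by
  obtain ⟨ι, u, v, w, hw, hwcover⟩ := hH
  have hedges : ∀ r {d d' : H.Dart} {e}, d.edge = d'.edge → e ∈ (seg r d).edges →
      e ∈ (seg r d').edges := by
    intro r d d' e hdd he
    rcases (dart_edge_eq_iff d d').mp hdd with rfl | rfl
    · exact he
    · have hrev : (seg r d'.symm).edges = (seg r d').edges.reverse :=
        (congrArg Walk.edges (hsymm r d')).trans (Walk.edges_reverse _)
      rwa [hrev, List.mem_reverse] at he
  refine ⟨R × ι, fun p => f p.1 (u p.2), fun p => f p.1 (v p.2),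
    fun p => (w p.2).expand (seg p.1), fun p => ⟨?_, ?_⟩, fun e he => ?_⟩
  · exact Walk.isPath_expand _ (fun d => (hseg _ d).1) (hdisj p.1) (hw p.2).1
  · rw [Walk.length_expand _ (fun d => (hseg _ d).2), (hw p.2).2]
  obtain ⟨⟨r, E⟩, ⟨d, rfl, he⟩, huniq⟩ := hcover e he
  obtain ⟨i, hi, hiuniq⟩ := hwcover _ d.edge_mem
  refine ⟨(r, i), ?_, ?_⟩
  · obtain ⟨d', hd', hdd⟩ := List.mem_map.mp (Walk.edges_eq_map_darts _ ▸ hi)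
    exact (Walk.mem_edges_expand _).mpr ⟨d', hd', hedges r hdd.symm he⟩
  · rintro ⟨r', i'⟩ he'
    obtain ⟨d', hd', he'⟩ := (Walk.mem_edges_expand _).mp he'
    obtain ⟨rfl, hdd⟩ := Prod.mk.inj (huniq (r', d'.edge) ⟨d', rfl, he'⟩)
    rw [hiuniq i' (hdd ▸ (w i').dart_edge_mem_edges hd')]

end PathDecomp

def hypercube (ι : Type*) [Fintype ι] : SimpleGraph (ι → ZMod 2) where
  Adj x y := hammingDist x y = 1
  symm := ⟨fun x y h => by simpa [hammingDist_comm] using h⟩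
  loopless := ⟨fun x h => by simp [hammingDist_self] at h⟩

theorem Q_eq_hypercube (n : ℕ) : Q n = hypercube (Fin n) := rfl

namespace hypercube

variable {ι κ : Type*}

theorem eq_of_sym2_add_single_eq [DecidableEq ι] {x y : ι → ZMod 2} {i j : ι}
    (h : s(x, x + Pi.single i 1) = s(y, y + Pi.single j 1)) :
    i = j ∧ (x = y ∨ x = y + Pi.single i 1) := by
  have hsum := congrArg (Sym2.lift ⟨fun a b => a + b, add_comm⟩) h
  simp only [Sym2.lift_mk] at hsum
  rw [ZModModule.add_cancel_left, ZModModule.add_cancel_left] at hsum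
  obtain rfl : i = j := by
    by_contra hij
    simpa [hij] using congrFun hsum i
  rcases Sym2.eq_iff.mp h with ⟨hxy, -⟩ | ⟨hxy, -⟩
  · exact ⟨rfl, .inl hxy⟩
  · exact ⟨rfl, .inr hxy⟩

variable [Fintype ι] [Fintype κ]

def congr (e : κ ≃ ι) : hypercube κ ≃g hypercube ι where
  toEquiv := e.arrowCongr (Equiv.refl _)
  map_rel_iff' {x y} := by
    change hammingDist (x ∘ e.symm) (y ∘ e.symm) = 1 ↔ hammingDist x y = 1
    rw [hammingDist_comp_equiv]

def parity (x : ι → ZMod 2) : ZMod 2 := ∑ i, x i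

theorem parity_add (x y : ι → ZMod 2) : parity (x + y) = parity x + parity y :=
  Finset.sum_add_distrib

variable [DecidableEq ι]

theorem parity_add_single (x : ι → ZMod 2) (i : ι) :
    parity (x + Pi.single i 1) = parity x + 1 := by
  rw [parity_add]
  simp [parity]

theorem hammingNorm_eq_one_iff {z : ι → ZMod 2} :
    hammingNorm z = 1 ↔ ∃ i, z = Pi.single i 1 := by
  have h01 : ∀ a : ZMod 2, a ≠ 0 ↔ a = 1 := by decide
  rw [hammingNorm, Finset.card_eq_one]
  refine exists_congr fun i => ?_
  rw [Finset.ext_iff, funext_iff]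
  refine forall_congr' fun j => ?_
  rcases eq_or_ne j i with rfl | hj
  · simp [h01]
  · simp [hj]

theorem adj_iff {x y : ι → ZMod 2} :
    (hypercube ι).Adj x y ↔ ∃ i, y = x + Pi.single i 1 := by
  change hammingDist x y = 1 ↔ _
  rw [hammingDist_eq_hammingNorm, hammingNorm_eq_one_iff]
  exact exists_congr fun i => neg_add_eq_iff_eq_add

theorem adj_add_single (x : ι → ZMod 2) (i : ι) : (hypercube ι).Adj x (x + Pi.single i 1) :=
  adj_iff.mpr ⟨i, rfl⟩

end hypercube

namespace Blocks

open hypercube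

variable {m t : ℕ}

def lift (q : Fin m → ZMod 2) : Fin m × Fin t → ZMod 2 := fun p => q p.1

def mask (d : Fin m → ZMod 2) (k : ℕ) : Fin m × Fin t → ZMod 2 :=
  fun p => if (p.2 : ℕ) < k then d p.1 else 0

def column (j : Fin t) (x : Fin m × Fin t → ZMod 2) : Fin m → ZMod 2 := fun b => x (b, j)

theorem lift_add (a b : Fin m → ZMod 2) : lift (t := t) (a + b) = lift a + lift b := rfl

theorem column_add (j : Fin t) (x y : Fin m × Fin t → ZMod 2) :
    column j (x + y) = column j x + column j y := rfl

theorem column_lift (j : Fin t) (a : Fin m → ZMod 2) : column j (lift a) = a := rfl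

theorem mask_zero (d : Fin m → ZMod 2) : mask (t := t) d 0 = 0 := by
  funext p
  simp [mask]

theorem mask_self (d : Fin m → ZMod 2) : mask (t := t) d t = lift d := by
  funext p
  simp [mask, lift]

theorem mask_succ_single (c : Fin m) (j : Fin t) :
    mask (Pi.single c 1) (j + 1) = mask (Pi.single c 1) j + Pi.single (c, j) 1 := by
  funext ⟨b, i⟩
  simp only [mask, Pi.add_apply, Pi.single_apply, Prod.mk.injEq, Fin.ext_iff]
  split_ifs <;> simp_all <;> omega

theorem mask_injOn {d : Fin m → ZMod 2} (hd : d ≠ 0) :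
    Set.InjOn (mask (t := t) d) (Set.Iic t) := by
  obtain ⟨c, hc⟩ : ∃ c, d c ≠ 0 := by
    by_contra! h
    exact hd (funext h)
  have hlt : ∀ k l, k < l → l ≤ t → mask (t := t) d k ≠ mask d l := fun k l hkl hl h => by
    simpa [mask, hkl, hc] using (congrFun h (c, ⟨k, by omega⟩)).symm
  intro k hk l hl h
  rcases lt_trichotomy k l with hkl | rfl | hkl
  · exact absurd h (hlt k l hkl hl)
  · rfl
  · exact absurd h.symm (hlt l k hkl hk)

theorem parity_lift_single (ht : Odd t) (c : Fin m) :
    parity (lift (t := t) (Pi.single c 1)) = 1 := by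
  simp [parity, lift, Fintype.sum_prod_type, ht.natCast_zmod_two]

theorem parity_add_lift_snd (ht : Odd t) (r : Fin m × Fin t → ZMod 2)
    (d : (hypercube (Fin m)).Dart) : parity (r + lift d.snd) = parity (r + lift d.fst) + 1 := by
  obtain ⟨c, hc⟩ := adj_iff.mp d.adj
  rw [hc, lift_add, ← add_assoc, parity_add _ (lift _), parity_lift_single ht]

section blockWalk

theorem adj_add_mask_succ (u : Fin m × Fin t → ZMod 2) {d : Fin m → ZMod 2}
    (hd : ∃ c, d = Pi.single c 1) {k : ℕ} (hk : k < t) :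
    (hypercube (Fin m × Fin t)).Adj (u + mask d k) (u + mask d (k + 1)) := by
  obtain ⟨c, rfl⟩ := hd
  rw [mask_succ_single c ⟨k, hk⟩, ← add_assoc]
  exact adj_add_single _ _

def blockWalk (u : Fin m × Fin t → ZMod 2) (d : Fin m → ZMod 2)
    (hd : ∃ c, d = Pi.single c 1) :
    (hypercube (Fin m × Fin t)).Walk u (u + lift d) :=
  (Walk.ofSeq (fun k => u + mask d k) t fun _ hk => adj_add_mask_succ u hd hk).copy
    (by simp only [mask_zero, add_zero]) (by simp only [mask_self])

variable {u : Fin m × Fin t → ZMod 2} {d : Fin m → ZMod 2} {hd : ∃ c, d = Pi.single c 1}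

theorem length_blockWalk : (blockWalk u d hd).length = t := by
  simp [blockWalk]

theorem isPath_blockWalk : (blockWalk u d hd).IsPath := by
  obtain ⟨c, rfl⟩ := hd
  refine (Walk.isPath_copy _ _ _).mpr (Walk.isPath_ofSeq fun k hk l hl h => ?_)
  exact mask_injOn (fun h0 => by simpa using congrFun h0 c) hk hl (add_left_cancel h)

theorem mem_support_blockWalk {x : Fin m × Fin t → ZMod 2} :
    x ∈ (blockWalk u d hd).support ↔ ∃ k ≤ t, x = u + mask d k := by
  simp [blockWalk, Walk.support_ofSeq, eq_comm]

theorem mem_edges_blockWalk {e : Sym2 (Fin m × Fin t → ZMod 2)} :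
    e ∈ (blockWalk u d hd).edges ↔ ∃ k : Fin t, e = s(u + mask d k, u + mask d (k + 1)) := by
  simp only [blockWalk, Walk.edges_copy, Walk.edges_ofSeq, List.mem_map, List.mem_range]
  exact ⟨fun ⟨k, hk, h⟩ => ⟨⟨k, hk⟩, h.symm⟩, fun ⟨k, h⟩ => ⟨k, k.2, h.symm⟩⟩

end blockWalk

section segment

theorem exists_add_eq_single {a b : Fin m → ZMod 2} (h : (hypercube (Fin m)).Adj a b) :
    ∃ c, a + b = Pi.single c 1 := by
  obtain ⟨c, hc⟩ := adj_iff.mp h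
  exact ⟨c, by rw [hc, ZModModule.add_cancel_left]⟩

def segment (r : Fin m × Fin t → ZMod 2) (d : (hypercube (Fin m)).Dart) :
    (hypercube (Fin m × Fin t)).Walk (r + lift d.fst) (r + lift d.snd) :=
  if parity (r + lift d.fst) = 0 then
    (blockWalk _ (d.fst + d.snd) (exists_add_eq_single d.adj)).copy rfl
      (by rw [add_assoc, ← lift_add, ZModModule.add_cancel_left])
  else
    ((blockWalk (r + lift d.snd) (d.snd + d.fst) (exists_add_eq_single d.adj.symm)).copy rfl
      (by rw [add_assoc, ← lift_add, ZModModule.add_cancel_left])).reverse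

variable (r : Fin m × Fin t → ZMod 2) (d : (hypercube (Fin m)).Dart)

theorem length_segment : (segment r d).length = t := by
  unfold segment
  split <;> simp [length_blockWalk]

theorem isPath_segment : (segment r d).IsPath := by
  unfold segment
  split
  · exact (Walk.isPath_copy _ _ _).mpr isPath_blockWalk
  · exact (Walk.isPath_reverse_iff _).mpr ((Walk.isPath_copy _ _ _).mpr isPath_blockWalk)

theorem segment_symm (ht : Odd t) : segment r d.symm = (segment r d).reverse := by
  have hpar : parity (r + lift d.symm.fst) = parity (r + lift d.fst) + 1 :=
    parity_add_lift_snd ht r d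
  unfold segment
  by_cases h : parity (r + lift d.fst) = 0
  · have h' : parity (r + lift d.symm.fst) ≠ 0 := by rw [hpar, h]; decide
    rw [if_pos h, if_neg h']
    rfl
  · rw [if_neg h, if_pos (hpar.trans (ZMod.two_add_one_eq_zero_iff.mpr h)),
      Walk.reverse_reverse]
    rfl

theorem mem_support_segment {x : Fin m × Fin t → ZMod 2} (hx : x ∈ (segment r d).support) :
    ∃ a a' k, s(a, a') = d.edge ∧ k ≤ t ∧ x = r + (lift a + mask (a + a') k) := by
  unfold segment at hx
  split at hx
  · rw [Walk.support_copy] at hx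
    obtain ⟨k, hk, rfl⟩ := mem_support_blockWalk.mp hx
    exact ⟨d.fst, d.snd, k, rfl, hk, add_assoc _ _ _⟩
  · rw [Walk.support_reverse, List.mem_reverse, Walk.support_copy] at hx
    obtain ⟨k, hk, rfl⟩ := mem_support_blockWalk.mp hx
    exact ⟨d.snd, d.fst, k, Sym2.eq_swap, hk, add_assoc _ _ _⟩

theorem mem_edges_segment (ht : Odd t) {e : Sym2 (Fin m × Fin t → ZMod 2)}
    (he : e ∈ (segment r d).edges) :
    ∃ (a : Fin m → ZMod 2) (c : Fin m) (k : Fin t),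
      parity (r + lift a) = 0 ∧ d.edge = s(a, a + Pi.single c 1) ∧
      e = s(r + lift a + mask (Pi.single c 1) k, r + lift a + mask (Pi.single c 1) (k + 1)) := by
  unfold segment at he
  split at he
  · obtain ⟨c, hc⟩ := exists_add_eq_single d.adj
    rw [Walk.edges_copy, mem_edges_blockWalk] at he
    obtain ⟨k, rfl⟩ := he
    refine ⟨d.fst, c, k, ‹_›, ?_, by rw [hc]⟩
    rw [← hc, ZModModule.add_cancel_left]
    rfl
  · rename_i hodd
    obtain ⟨c, hc⟩ := exists_add_eq_single d.adj.symm
    rw [Walk.edges_reverse, List.mem_reverse, Walk.edges_copy, mem_edges_blockWalk] at he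
    obtain ⟨k, rfl⟩ := he
    refine ⟨d.snd, c, k, ?_, ?_, by rw [hc]⟩
    · rw [parity_add_lift_snd ht, ZMod.two_add_one_eq_zero_iff]
      exact hodd
    · rw [← hc, ZModModule.add_cancel_left]
      exact Sym2.eq_swap

theorem mem_edges_segment_of_parity_eq_zero (h : parity (r + lift d.fst) = 0) (k : Fin t) :
    s(r + lift d.fst + mask (d.fst + d.snd) k, r + lift d.fst + mask (d.fst + d.snd) (k + 1)) ∈
      (segment r d).edges := by
  unfold segment
  rw [if_pos h, Walk.edges_copy, mem_edges_blockWalk]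
  exact ⟨k, rfl⟩

end segment

theorem exists_even_start {y y' : Fin m × Fin t → ZMod 2}
    (h : (hypercube (Fin m × Fin t)).Adj y y') :
    ∃ (u : Fin m × Fin t → ZMod 2) (c : Fin m) (k : Fin t), parity u = 0 ∧
      s(y, y') = s(u + mask (Pi.single c 1) k, u + mask (Pi.single c 1) (k + 1)) := by
  obtain ⟨⟨c, k⟩, rfl⟩ := adj_iff.mp h
  have hy : y = y + mask (Pi.single c 1) k + mask (Pi.single c 1) k := by
    rw [add_assoc, ZModModule.add_self, add_zero]
  have hsucc := mask_succ_single c k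
  by_cases hv : parity (y + mask (Pi.single c 1) k) = 0
  · refine ⟨_, c, k, hv, ?_⟩
    rw [hsucc, ← add_assoc, ← hy]
  · refine ⟨y + mask (Pi.single c 1) k + Pi.single (c, k) 1, c, k, ?_, ?_⟩
    · rw [parity_add_single, ZMod.two_add_one_eq_zero_iff]
      exact hv
    · have hflip : y + mask (Pi.single c 1) k + Pi.single (c, k) 1 + mask (Pi.single c 1) k =
          y + Pi.single (c, k) 1 := by
        rw [add_right_comm, ← hy]
      rw [hflip, hsucc, ← add_assoc, hflip, add_assoc, ZModModule.add_self, add_zero]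
      exact Sym2.eq_swap

theorem even_start_unique {u u' : Fin m × Fin t → ZMod 2} {c c' : Fin m} {k k' : Fin t}
    (hu : parity u = 0) (hu' : parity u' = 0)
    (h : s(u + mask (Pi.single c 1) k, u + mask (Pi.single c 1) (k + 1)) =
      s(u' + mask (Pi.single c' 1) k', u' + mask (Pi.single c' 1) (k' + 1))) :
    u = u' ∧ c = c' := by
  rw [mask_succ_single, mask_succ_single, ← add_assoc, ← add_assoc] at h
  obtain ⟨hck, hx | hx⟩ := eq_of_sym2_add_single_eq h <;>
    obtain ⟨rfl, rfl⟩ := Prod.mk.inj hck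
  · exact ⟨add_right_cancel hx, rfl⟩
  · rw [add_right_comm, add_left_inj] at hx
    rw [hx, parity_add_single, hu'] at hu
    exact absurd hu (by decide)

section representatives

variable [NeZero t]

theorem lift_injective : Function.Injective (lift (m := m) (t := t)) :=
  fun _ _ h => congrArg (column 0) h

theorem exists_add_lift_eq (u : Fin m × Fin t → ZMod 2) :
    ∃ r a, column 0 r = 0 ∧ r + lift a = u :=
  ⟨u + lift (column 0 u), column 0 u, by rw [column_add, column_lift, ZModModule.add_self],
    by rw [add_assoc, ZModModule.add_self, add_zero]⟩

theorem eq_of_add_lift_eq {r r' : Fin m × Fin t → ZMod 2} {a a' : Fin m → ZMod 2}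
    (hr : column 0 r = 0) (hr' : column 0 r' = 0) (h : r + lift a = r' + lift a') :
    r = r' ∧ a = a' := by
  have ha : a = a' := by
    simpa [column_add, column_lift, hr, hr'] using congrArg (column 0) h
  exact ⟨add_right_cancel (ha ▸ h), ha⟩

-- Positions `0` and `t - 1` tell an endpoint of a segment (a lift) from an interior vertex,
-- and recover the edge of `Q_m` from an interior vertex.
theorem lift_add_mask_cases (a a' : Fin m → ZMod 2) {k : ℕ} (hk : k ≤ t) :
    (∃ c, (c = a ∨ c = a') ∧ lift (t := t) a + mask (a + a') k = lift c) ∨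
      (column (0 : Fin t) (lift a + mask (a + a') k) = a' ∧
        column (Fin.rev (0 : Fin t)) (lift a + mask (a + a') k) = a) := by
  rcases Nat.eq_zero_or_pos k with rfl | hk0
  · exact .inl ⟨a, .inl rfl, by rw [mask_zero, add_zero]⟩
  rcases hk.eq_or_lt with rfl | hkt
  · exact .inl ⟨a', .inr rfl, by rw [mask_self, ← lift_add, ZModModule.add_cancel_left]⟩
  have hlast : ¬ ((Fin.rev (0 : Fin t) : ℕ) < k) := by
    simp only [Fin.val_rev, Fin.val_zero]
    omega
  refine .inr ⟨funext fun b => ?_, funext fun b => ?_⟩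
  · simp [column, lift, mask, hk0, CharTwo.add_cancel_left]
  · simp only [column, lift, mask, Pi.add_apply, if_neg hlast, add_zero]

theorem segment_support_inter (r : Fin m × Fin t → ZMod 2) {d d' : (hypercube (Fin m)).Dart}
    (hne : d.edge ≠ d'.edge) {x : Fin m × Fin t → ZMod 2} (hx : x ∈ (segment r d).support)
    (hx' : x ∈ (segment r d').support) : ∃ c ∈ d.edge, c ∈ d'.edge ∧ x = r + lift c := by
  obtain ⟨a, a', k, hd, hk, rfl⟩ := mem_support_segment r d hx
  obtain ⟨b, b', l, hd', hl, hz⟩ := mem_support_segment r d' hx'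
  replace hz := add_left_cancel hz
  have hne_of_edge : ∀ {v v'} {e : (hypercube (Fin m)).Dart}, s(v, v') = e.edge → v ≠ v' :=
    fun he => ((hypercube _).mem_edgeSet.mp (he ▸ Dart.edge_mem _)).ne
  rcases lift_add_mask_cases a a' hk with ⟨c, hc, hzc⟩ | ⟨h0, h1⟩ <;>
    rcases lift_add_mask_cases b b' hl with ⟨c', hc', hzc'⟩ | ⟨h0', h1'⟩
  · obtain rfl : c = c' := lift_injective (hzc.symm.trans (hz.trans hzc'))
    exact ⟨c, hd ▸ Sym2.mem_iff.mpr hc, hd' ▸ Sym2.mem_iff.mpr hc', by rw [hzc]⟩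
  · rw [← hz, hzc, column_lift] at h0' h1'
    exact absurd (h1'.symm.trans h0') (hne_of_edge hd')
  · rw [hz, hzc', column_lift] at h0 h1
    exact absurd (h1.symm.trans h0) (hne_of_edge hd)
  · rw [hz] at h0 h1
    obtain rfl := h0.symm.trans h0'
    obtain rfl := h1.symm.trans h1'
    exact absurd (hd.symm.trans hd') hne

theorem existsUnique_segment (ht : Odd t) {e : Sym2 (Fin m × Fin t → ZMod 2)}
    (he : e ∈ (hypercube (Fin m × Fin t)).edgeSet) :
    ∃! p : {r : Fin m × Fin t → ZMod 2 // column 0 r = 0} × Sym2 (Fin m → ZMod 2),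
      ∃ d : (hypercube (Fin m)).Dart, d.edge = p.2 ∧ e ∈ (segment p.1.1 d).edges := by
  induction e using Sym2.ind with | _ y y' => ?_
  obtain ⟨u, c, k, hu, he⟩ := exists_even_start he
  obtain ⟨r, a, hr, rfl⟩ := exists_add_lift_eq u
  let d : (hypercube (Fin m)).Dart := ⟨(a, a + Pi.single c 1), adj_add_single a c⟩
  refine ⟨(⟨r, hr⟩, d.edge), ⟨d, rfl, ?_⟩, ?_⟩
  · have hmem := mem_edges_segment_of_parity_eq_zero r d hu k
    rwa [ZModModule.add_cancel_left, ← he] at hmem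
  · rintro ⟨⟨r', hr'⟩, _⟩ ⟨d', rfl, he'⟩
    obtain ⟨a', c', k', hpar, hd', he'⟩ := mem_edges_segment r' d' ht he'
    obtain ⟨hstart, rfl⟩ := even_start_unique hpar hu (he'.symm.trans he)
    obtain ⟨rfl, rfl⟩ := eq_of_add_lift_eq hr' hr hstart
    exact Prod.ext rfl hd'

theorem pathDecomp (ht : Odd t) {s : ℕ} (h : PathDecomp (hypercube (Fin m)) s) :
    PathDecomp (hypercube (Fin m × Fin t)) (t * s) :=
  PathDecomp.of_expand (f := fun (r : {r // column 0 r = 0}) a => r.1 + lift a)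
    (fun r => segment r.1) h (fun r d => ⟨isPath_segment r.1 d, length_segment r.1 d⟩)
    (fun r d => segment_symm r.1 d ht)
    (fun r _ _ hne _ hx hx' => segment_support_inter r.1 hne hx hx')
    (fun _ he => existsUnique_segment ht he)

end representatives

end Blocks

theorem decomp_lift (n t s : ℕ) (ht : Odd t) (htn : t ∣ n)
    (h : PathDecomp (Q (n / t)) s) : PathDecomp (Q n) (t * s) := by
  have : NeZero t := ⟨ht.pos.ne'⟩
  rw [Q_eq_hypercube] at h ⊢
  exact (Blocks.pathDecomp ht h).map_iso
    (hypercube.congr (finProdFinEquiv.trans (finCongr (Nat.div_mul_cancel htn))))
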